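/- The 'hyper-optimistic conjecture' fails for k = 4, n = 2: the set A = {(1,1),(1,2),(1,3),(2,1),(2,3),(2,4),(3,2),(3,3),(3,4),(4,1),(4,2),(4,4)} ⊂ [4]^2 is line-free, and the sum over cells Γ of |A ∩ Γ|/|Γ| exceeds 7, the maximal size of a Fujimura set in Δ_{2,4}. -/
import Mathlib


def LineFree {n k : ℕ} (A : Finset (Fin n → Fin k)) : Prop :=
  ¬ ∃ w : Fin n → Option (Fin k), (∃ j, w j = none) ∧
      ∀ i : Fin k, (fun j => (w j).getD i) ∈ A

/-- The number of occurrences of the letter `i` in the word `w ∈ [4]^2`. -/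
def cnt (w : Fin 2 → Fin 4) (i : Fin 4) : ℕ :=
  (Finset.univ.filter fun j => w j = i).card

/-- The counterexample set
`A = {11,12,13,21,23,24,32,33,34,41,42,44}` (digits shifted to be 0-based). -/
def counterA : Finset (Fin 2 → Fin 4) :=
  {![0,0], ![0,1], ![0,2], ![1,0], ![1,2], ![1,3],
   ![2,1], ![2,2], ![2,3], ![3,0], ![3,1], ![3,3]}

/-- A Fujimura set in `Δ_{2,4}`: a set of 4-tuples of naturals summing to 2, containing
no simplex `(a₁+r,a₂,a₃,a₄), (a₁,a₂+r,a₃,a₄), (a₁,a₂,a₃+r,a₄), (a₁,a₂,a₃,a₄+r)`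
with `r > 0`. -/
def IsFujimura (B : Finset (Fin 4 → ℕ)) : Prop :=
  (∀ a ∈ B, ∑ i, a i = 2) ∧
    ¬ ∃ (a : Fin 4 → ℕ) (r : ℕ), 0 < r ∧
        ∀ i : Fin 4, (fun j => a j + if j = i then r else 0) ∈ B

/-- The ten elements of `Δ_{2,4}`. -/
def Lcell : Fin 10 → (Fin 4 → ℕ) :=
  ![![2,0,0,0], ![0,2,0,0], ![0,0,2,0], ![0,0,0,2], ![1,1,0,0],
    ![1,0,1,0], ![1,0,0,1], ![0,1,1,0], ![0,1,0,1], ![0,0,1,1]]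

/-- The five simplices in `Δ_{2,4}`, as rows of indices into `Lcell`. -/
def Msimp : Fin 5 → Fin 4 → Fin 10 :=
  ![![0,4,5,6], ![4,1,7,8], ![5,7,2,9], ![6,8,9,3], ![0,1,2,3]]

/-- Base points of the five simplices. -/
def Abase : Fin 5 → (Fin 4 → ℕ) :=
  ![![1,0,0,0], ![0,1,0,0], ![0,0,1,0], ![0,0,0,1], ![0,0,0,0]]

/-- Radii of the five simplices. -/
def Rsimp : Fin 5 → ℕ := ![1,1,1,1,2]

lemma hrep : ∀ t : Fin 5, ∀ i : Fin 4,
    (fun j => Abase t j + if j = i then Rsimp t else 0) = Lcell (Msimp t i) := by decide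

lemma keyM : ∀ i1 i2 i3 i4 i5 : Fin 4,
    3 ≤ ({Msimp 0 i1, Msimp 1 i2, Msimp 2 i3, Msimp 3 i4, Msimp 4 i5} :
      Finset (Fin 10)).card := by
  decide

lemma vec4 : ∀ x0 x1 x2 x3 : ℕ, x0 + x1 + x2 + x3 = 2 →
    ∃ i : Fin 10, ![x0, x1, x2, x3] = Lcell i := by
  intro x0 x1 x2 x3 h
  have b0 : x0 ≤ 2 := by omega
  have b1 : x1 ≤ 2 := by omega
  have b2 : x2 ≤ 2 := by omega
  have b3 : x3 ≤ 2 := by omega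
  interval_cases x0 <;> interval_cases x1 <;> interval_cases x2 <;> interval_cases x3 <;>
    first | omega | decide

lemma mem_range4 : ∀ a : Fin 4 → ℕ, (∑ i, a i = 2) → ∃ i : Fin 10, a = Lcell i := by
  intro a h
  have ha : a = ![a 0, a 1, a 2, a 3] := by funext j; fin_cases j <;> rfl
  rw [Fin.sum_univ_four] at h
  rw [ha]
  exact vec4 _ _ _ _ h

/-- A Fujimura set of size 7. -/
def B7 : Finset (Fin 4 → ℕ) :=
  {Lcell 2, Lcell 3, Lcell 4, Lcell 5, Lcell 6, Lcell 7, Lcell 8}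

lemma B7_fujimura : IsFujimura B7 := by
  constructor
  · decide
  · rintro ⟨a, r, hr, h⟩
    have hs : ∀ b ∈ B7, ∑ i, b i = 2 := by decide
    have h20 := hs _ (h 0)
    rw [Fin.sum_univ_four] at h20
    simp only [if_pos, if_neg, Fin.reduceEq, reduceIte, add_zero] at h20
    -- h20 : a 0 + r + a 1 + a 2 + a 3 = 2  (approximately)
    rcases (by omega : r = 1 ∨ r = 2) with hr1 | hr2
    · rcases (by omega : a 0 = 1 ∨ a 1 = 1 ∨ a 2 = 1 ∨ a 3 = 1) with h1 | h1 | h1 | h1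
      · have he : (fun j => a j + if j = (0 : Fin 4) then r else 0) = ![2,0,0,0] := by
          funext j; fin_cases j <;> simp [h1, hr1] <;> omega
        exact (by decide : ![2,0,0,0] ∉ B7) (he ▸ h 0)
      · have he : (fun j => a j + if j = (1 : Fin 4) then r else 0) = ![0,2,0,0] := by
          funext j; fin_cases j <;> simp [h1, hr1] <;> omega
        exact (by decide : ![0,2,0,0] ∉ B7) (he ▸ h 1)
      · have he : (fun j => a j + if j = (3 : Fin 4) then r else 0) = ![0,0,1,1] := by
          funext j; fin_cases j <;> simp [h1, hr1] <;> omega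
        exact (by decide : ![0,0,1,1] ∉ B7) (he ▸ h 3)
      · have he : (fun j => a j + if j = (2 : Fin 4) then r else 0) = ![0,0,1,1] := by
          funext j; fin_cases j <;> simp [h1, hr1] <;> omega
        exact (by decide : ![0,0,1,1] ∉ B7) (he ▸ h 2)
    · have he : (fun j => a j + if j = (0 : Fin 4) then r else 0) = ![2,0,0,0] := by
        funext j; fin_cases j <;> simp [hr2] <;> omega
      exact (by decide : ![2,0,0,0] ∉ B7) (he ▸ h 0)

lemma fujimura_card_le (B : Finset (Fin 4 → ℕ)) (hB : IsFujimura B) : B.card ≤ 7 := by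
  obtain ⟨hsum2, hnos⟩ := hB
  have hmiss : ∀ t : Fin 5, ∃ c : Fin 4, Lcell (Msimp t c) ∉ B := by
    intro t
    by_contra hc
    push_neg at hc
    refine hnos ⟨Abase t, Rsimp t, ?_, fun i => ?_⟩
    · fin_cases t <;> decide
    · rw [hrep t i]; exact hc i
  choose c hc using hmiss
  have hIcard := keyM (c 0) (c 1) (c 2) (c 3) (c 4)
  have hinj : Function.Injective Lcell := by
    have : ∀ i j : Fin 10, Lcell i = Lcell j → i = j := by decide
    exact fun i j => this i j
  set I : Finset (Fin 10) :=
    {Msimp 0 (c 0), Msimp 1 (c 1), Msimp 2 (c 2), Msimp 3 (c 3), Msimp 4 (c 4)} with hI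
  have hTcard : (I.image Lcell).card = I.card := Finset.card_image_of_injective I hinj
  have hdisj : Disjoint B (I.image Lcell) := by
    rw [Finset.disjoint_right]
    intro x hx
    obtain ⟨i, hiI, rfl⟩ := Finset.mem_image.mp hx
    rw [hI] at hiI
    simp only [Finset.mem_insert, Finset.mem_singleton] at hiI
    rcases hiI with rfl | rfl | rfl | rfl | rfl
    exacts [hc 0, hc 1, hc 2, hc 3, hc 4]
  have hsub : B ∪ I.image Lcell ⊆ Finset.univ.image Lcell := by
    intro x hx
    rcases Finset.mem_union.mp hx with hx | hx
    · obtain ⟨i, hi⟩ := mem_range4 x (hsum2 x hx)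
      exact Finset.mem_image.mpr ⟨i, Finset.mem_univ i, hi.symm⟩
    · obtain ⟨i, _, rfl⟩ := Finset.mem_image.mp hx
      exact Finset.mem_image.mpr ⟨i, Finset.mem_univ i, rfl⟩
  have h10 : (Finset.univ.image Lcell).card ≤ 10 :=
    le_trans Finset.card_image_le (by simp)
  have hle := le_trans (Finset.card_le_card hsub) h10
  rw [Finset.card_union_of_disjoint hdisj] at hle
  omega

/-- The hyper-optimistic conjecture fails for `k = 4`, `n = 2`: the set `counterA` is
line-free, its cell-weighted density sum (equivalently `∑_{w ∈ A} 1/|Γ(w)|`, where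
`Γ(w)` is the cell of `w`) exceeds `7`, and `7` is the maximal size of a Fujimura set
in `Δ_{2,4}`. -/
theorem hyper_optimistic_fails :
    LineFree counterA ∧
    (7 : ℚ) < ∑ w ∈ counterA,
        (1 : ℚ) / ((Finset.univ.filter
          fun v : Fin 2 → Fin 4 => ∀ i, cnt v i = cnt w i).card) ∧
    IsGreatest {m | ∃ B : Finset (Fin 4 → ℕ), IsFujimura B ∧ B.card = m} 7 := by
  refine ⟨?_, ?_, ?_⟩
  · unfold LineFree; decide
  · have hcell : ∀ w : Fin 2 → Fin 4, (Finset.univ.filter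
        fun v : Fin 2 → Fin 4 => ∀ i, cnt v i = cnt w i).card
        = if w 0 = w 1 then 1 else 2 := by decide
    rw [show counterA = {![0,0], ![0,1], ![0,2], ![1,0], ![1,2], ![1,3],
      ![2,1], ![2,2], ![2,3], ![3,0], ![3,1], ![3,3]} from rfl]
    rw [Finset.sum_insert (by decide), Finset.sum_insert (by decide),
      Finset.sum_insert (by decide), Finset.sum_insert (by decide),
      Finset.sum_insert (by decide), Finset.sum_insert (by decide),
      Finset.sum_insert (by decide), Finset.sum_insert (by decide),
      Finset.sum_insert (by decide), Finset.sum_insert (by decide),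
      Finset.sum_insert (by decide), Finset.sum_singleton]
    simp only [hcell, Matrix.cons_val_zero, Matrix.cons_val_one, Matrix.head_cons]
    simp only [Fin.reduceEq, reduceIte]
    norm_num
  · constructor
    · exact ⟨B7, B7_fujimura, by decide⟩
    · rintro m ⟨B, hB, rfl⟩
      exact fujimura_card_le B hB
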